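/- arXiv:2605.22653 — 4 statements merged into one kernel-verified Lean document; each statement's English description precedes it below -/
import Mathlib

section
/- For every real α > 0, the value OPT(α) defined as (α + (1−α)^{1+1/α})/(α+1) for 0 < α < 1 and as α/(α+1) for α ≥ 1 satisfies OPT(α) > 1/e. -/
noncomputable def OPT (α : ℝ) : ℝ :=
  if α < 1 then (α + (1 - α) ^ (1 + 1 / α)) / (α + 1) else α / (α + 1)

lemma two_log_ge (s : ℝ) (hs0 : 0 < s) (hs1 : s ≤ 1) : s - s⁻¹ ≤ 2 * Real.log s := by
  set f : ℝ → ℝ := fun x => 2 * Real.log x - x + x⁻¹ with hf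
  set f' : ℝ → ℝ := fun x => 2 * x⁻¹ - 1 + -(x ^ 2)⁻¹ with hf'
  have hder : ∀ x ∈ Set.Icc s 1, HasDerivAt f (f' x) x := by
    intro x hx
    have hx0 : x ≠ 0 := by have := hx.1; intro h; rw [h] at this; linarith
    exact (((Real.hasDerivAt_log hx0).const_mul 2).sub (hasDerivAt_id x)).add
      (hasDerivAt_inv hx0)
  have hanti : AntitoneOn f (Set.Icc s 1) := by
    apply antitoneOn_of_hasDerivWithinAt_nonpos (convex_Icc s 1)
    · intro x hx; exact (hder x hx).continuousAt.continuousWithinAt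
    · intro x hx
      rw [interior_Icc] at hx
      exact (hder x ⟨hx.1.le, hx.2.le⟩).hasDerivWithinAt
    · intro x hx
      rw [interior_Icc] at hx
      have hx0 : 0 < x := lt_trans hs0 hx.1
      have : f' x = -((x - 1) ^ 2 / x ^ 2) := by
        simp only [hf']
        field_simp
        ring
      rw [this]
      have : 0 ≤ (x - 1) ^ 2 / x ^ 2 := by positivity
      linarith
  have h := hanti (Set.left_mem_Icc.2 hs1) (Set.right_mem_Icc.2 hs1) hs1
  simp only [hf, Real.log_one] at h
  norm_num at h
  linarith

lemma cube_le_exp (x : ℝ) : (1 + x / 3) ^ 3 ≤ Real.exp x := by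
  have h1 : 1 + x / 3 ≤ Real.exp (x / 3) := by
    have := Real.add_one_le_exp (x / 3); linarith
  have h2 : Real.exp x = Real.exp (x / 3) ^ 3 := by
    rw [← Real.exp_nat_mul]; congr 1; push_cast; ring
  rw [h2]
  nlinarith [Real.exp_pos (x / 3), sq_nonneg (1 + x / 3 + Real.exp (x / 3)),
    sq_nonneg (1 + x / 3 - Real.exp (x / 3)), sq_nonneg (1 + x / 3)]

theorem stmt7 (α : ℝ) (hα : 0 < α) : OPT α > 1 / Real.exp 1 := by
  have hE : (2.7182818 : ℝ) < Real.exp 1 := by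
    have := Real.exp_one_gt_d9; norm_num at this ⊢; linarith
  rcases lt_or_ge α 1 with h1 | h1
  · rw [OPT, if_pos h1]
    have h1α : 0 < 1 - α := by linarith
    set s := Real.sqrt (1 - α) with hs
    have hs0 : 0 < s := Real.sqrt_pos.2 h1α
    have hs2 : s ^ 2 = 1 - α := Real.sq_sqrt h1α.le
    have hslt1 : s < 1 := by nlinarith
    have hαs : α = 1 - s ^ 2 := by linarith
    -- log bound: log(1-α) ≥ -α/s
    have hlog : -α / s ≤ Real.log (1 - α) := by
      have h2 := two_log_ge s hs0 hslt1.le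
      have hlo : Real.log (1 - α) = 2 * Real.log s := by
        rw [← hs2, Real.log_pow]; push_cast; ring
      have hid : s - s⁻¹ = -α / s := by
        field_simp
        nlinarith
      rw [hlo]; rw [hid] at h2; exact h2
    -- rpow lower bound
    set X := (1 - α) ^ (1 + 1 / α) with hX
    have hexp_le : Real.exp (-(α + 1) / s) ≤ X := by
      rw [hX, Real.rpow_def_of_pos h1α]
      apply Real.exp_le_exp.2
      have hc : (0:ℝ) < 1 + 1 / α := by positivity
      have hid : -(α + 1) / s = (-α / s) * (1 + 1 / α) := by
        field_simp
      rw [hid]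
      exact mul_le_mul_of_nonneg_right hlog hc.le
    have hXpos : 0 < X := lt_of_lt_of_le (Real.exp_pos _) hexp_le
    rw [gt_iff_lt, div_lt_div_iff₀ (Real.exp_pos 1) (by linarith : (0:ℝ) < α + 1)]
    rcases le_or_gt (α + 1) (Real.exp 1 * α) with hc | hc
    · nlinarith [mul_pos (Real.exp_pos 1) hXpos]
    · -- polynomial regime: s ∈ (0.64, 1)
      have ht64 : (0.64 : ℝ) < s := by
        nlinarith [mul_lt_mul_of_pos_right hE hα, sq_nonneg (s - 0.64)]
      -- S(s) < 0
      have hS : s ^ 5 + (40 - 27 * Real.exp 1) * s ^ 4 + (82 - 27 * Real.exp 1) * s ^ 3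
          + 44 * s ^ 2 - 40 * s + 8 < 0 := by
        nlinarith [pow_pos hs0 3, pow_pos hs0 4, mul_pos (pow_pos hs0 3) hs0,
          mul_pos (mul_pos hs0 hs0) hs0, sq_nonneg (s - 1), sq_nonneg (s - 0.64),
          mul_nonneg (mul_nonneg (sub_nonneg.2 ht64.le) (sub_nonneg.2 hslt1.le))
            (sq_nonneg s),
          mul_nonneg (sub_nonneg.2 ht64.le) (sub_nonneg.2 hslt1.le)]
      have hQ : 27 * s ^ 3 * ((α + 1) - Real.exp 1 * α) < (s ^ 2 + 4 * s - 2) ^ 3 := by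
        have h1s : s - 1 < 0 := by linarith
        have hprod := mul_pos_of_neg_of_neg h1s hS
        rw [hαs]
        nlinarith [hprod]
      have hcube_id : 1 + (1 - (α + 1) / s) / 3 = (s ^ 2 + 4 * s - 2) / (3 * s) := by
        rw [hαs]
        field_simp
        ring
      have hpoly : (α + 1) - Real.exp 1 * α < (1 + (1 - (α + 1) / s) / 3) ^ 3 := by
        rw [hcube_id, div_pow]
        rw [lt_div_iff₀ (by positivity : (0:ℝ) < (3 * s) ^ 3)]
        nlinarith [hQ]
      have hc3 := cube_le_exp (1 - (α + 1) / s)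
      have hEX : Real.exp (1 - (α + 1) / s) = Real.exp 1 * Real.exp (-(α + 1) / s) := by
        rw [← Real.exp_add]; ring_nf
      have hfin : Real.exp 1 * Real.exp (-(α + 1) / s) ≤ Real.exp 1 * X :=
        mul_le_mul_of_nonneg_left hexp_le (Real.exp_pos 1).le
      nlinarith [hpoly, hc3, hfin, hEX.ge, hEX.le]
  · rw [OPT, if_neg (not_lt.2 h1)]
    rw [gt_iff_lt, div_lt_div_iff₀ (Real.exp_pos 1) (by linarith : (0:ℝ) < α + 1)]
    nlinarith [mul_lt_mul_of_pos_right hE hα]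
end

section
/- Define g(α, α̂) := α/(α+1) + ((1−α)/α)·(1−α̂)^{1/α̂} − (1−α̂)^{(α+1)/α̂}/(α(α+1)) for 0 < α̂ ≤ 1 and g(α, α̂) := α/(α+1) for α̂ ≥ 1, where α > 0. If 0 < α̂ ≤ α, then g(α, α̂) ≥ OPT(α̂) ≥ 1/e, where OPT(α̂) = (α̂ + (1−α̂)^{1+1/α̂})/(α̂+1) for α̂ < 1 and α̂/(α̂+1) for α̂ ≥ 1. -/
noncomputable def g (α αhat : ℝ) : ℝ :=
  if αhat ≤ 1 then
    α / (α + 1) + ((1 - α) / α) * (1 - αhat) ^ (1 / αhat)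
      - (1 - αhat) ^ ((α + 1) / αhat) / (α * (α + 1))
  else α / (α + 1)

open Real intervalIntegral

lemma log_ge_aux {x : ℝ} (hx : 0 < x) (hx1 : x ≤ 1) : (x^2 - 1)/(2*x) ≤ Real.log x := by
  have hxinv : (1:ℝ) ≤ x⁻¹ := by
    have h := mul_inv_cancel₀ (ne_of_gt hx)
    nlinarith [inv_pos.mpr hx]
  have h1 : Real.log x⁻¹ ≤ Real.sinh (Real.log x⁻¹) :=
    Real.self_le_sinh_iff.mpr (Real.log_nonneg hxinv)
  rw [Real.sinh_log (inv_pos.mpr hx), Real.log_inv, inv_inv] at h1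
  rw [div_le_iff₀ (by positivity)]
  have h2 := mul_inv_cancel₀ (ne_of_gt hx)
  nlinarith [mul_le_mul_of_nonneg_right h1 hx.le]

lemma beta_ge {s : ℝ} (h0 : 0 < s) (h1 : s < 1) :
    (1 - s/(2*(1-s))) / Real.exp 1 ≤ (1-s) ^ ((1:ℝ)/s) := by
  have hx : (0:ℝ) < 1 - s := by linarith
  have hlog : ((1-s)^2 - 1)/(2*(1-s)) ≤ Real.log (1-s) := log_ge_aux hx (by linarith)
  rw [Real.rpow_def_of_pos hx]
  have key : -1 - s/(2*(1-s)) ≤ Real.log (1-s) * (1/s) := by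
    have h2 : ((1-s)^2 - 1)/(2*(1-s)) * (1/s) ≤ Real.log (1-s) * (1/s) :=
      mul_le_mul_of_nonneg_right hlog (by positivity)
    refine le_trans (le_of_eq ?_) h2
    field_simp
    ring
  calc (1 - s/(2*(1-s))) / Real.exp 1 ≤ Real.exp (-(s/(2*(1-s)))) / Real.exp 1 := by
        gcongr
        linarith [Real.add_one_le_exp (-(s/(2*(1-s))))]
    _ = Real.exp (-(s/(2*(1-s))) - 1) := (Real.exp_sub _ _).symm
    _ ≤ Real.exp (Real.log (1-s) * (1/s)) := Real.exp_le_exp.mpr (by linarith [key])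

lemma rpow_integrable {a b : ℝ} (hb : 0 < b) (hb1 : b ≤ 1) :
    IntervalIntegrable (fun t : ℝ => t ^ a) MeasureTheory.volume b 1 := by
  apply ContinuousOn.intervalIntegrable
  apply ContinuousOn.rpow_const continuousOn_id
  intro t ht
  left
  rw [Set.uIcc_of_le hb1] at ht
  exact ne_of_gt (lt_of_lt_of_le hb ht.1)

lemma int_eval {a b : ℝ} (ha : 0 < a) (hb : 0 < b) (hb1 : b ≤ 1) :
    ∫ t in b..(1:ℝ), (1 - t ^ a) = (1 - b) - (1 - b ^ (a+1))/(a+1) := by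
  rw [intervalIntegral.integral_sub intervalIntegrable_const (rpow_integrable hb hb1),
    intervalIntegral.integral_const, integral_rpow (Or.inl (by linarith)), Real.one_rpow]
  simp

lemma pointwise {s a t : ℝ} (hs : 0 < s) (hsa : s ≤ a) (ht : 0 < t) (ht1 : t ≤ 1) :
    (1 - t ^ a)/a ≤ (1 - t ^ s)/s := by
  have ha : 0 < a := lt_of_lt_of_le hs hsa
  have hu : t ^ a = (t ^ s) ^ (a/s) := by
    rw [← Real.rpow_mul ht.le, mul_div_cancel₀ a (ne_of_gt hs)]
  have hts : 0 ≤ t ^ s := Real.rpow_nonneg ht.le s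
  have hber : 1 + (a/s) * ((t^s) - 1) ≤ (t^s)^(a/s) := by
    have h := one_add_mul_self_le_rpow_one_add (s := t^s - 1) (by linarith)
      (p := a/s) ((one_le_div hs).mpr hsa)
    simpa using h
  rw [div_le_div_iff₀ ha hs, hu]
  have hA : a/s * s = a := div_mul_cancel₀ a (ne_of_gt hs)
  nlinarith [mul_le_mul_of_nonneg_right hber hs.le]

theorem stmt10 (α αhat : ℝ) (hα : 0 < α) (hαhat : 0 < αhat) (hle : αhat ≤ α) :
    g α αhat ≥ OPT αhat ∧ OPT αhat ≥ 1 / Real.exp 1 := by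
  rcases lt_or_ge αhat 1 with h1 | h1
  · -- main case αhat < 1
    have hx : (0:ℝ) < 1 - αhat := by linarith
    set b : ℝ := (1 - αhat) ^ ((1:ℝ)/αhat) with hbdef
    have hb0 : 0 < b := Real.rpow_pos_of_pos hx _
    have hb1 : b < 1 := Real.rpow_lt_one hx.le (by linarith) (by positivity)
    have hbs : b ^ αhat = 1 - αhat := by
      rw [hbdef, ← Real.rpow_mul hx.le, one_div, inv_mul_cancel₀ (ne_of_gt hαhat),
        Real.rpow_one]
    have e2 : b ^ (αhat+1) = (1-αhat) * b := by
      rw [Real.rpow_add hb0, hbs, Real.rpow_one]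
    have eα : (1-αhat) ^ ((α+1)/αhat) = b ^ (α+1) := by
      rw [hbdef, ← Real.rpow_mul hx.le]
      congr 1
      field_simp
    have hα1 : α + 1 ≠ 0 := by positivity
    have hOPT : OPT αhat = 1 - b - (∫ t in b..(1:ℝ), (1 - t ^ αhat))/αhat := by
      simp only [OPT, if_pos h1]
      rw [int_eval hαhat hb0 hb1.le, e2, Real.rpow_one_add' hx.le (by positivity), ← hbdef]
      field_simp
      ring
    have hg : g α αhat = 1 - b - (∫ t in b..(1:ℝ), (1 - t ^ α))/α := by
      simp only [g, if_pos h1.le]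
      rw [int_eval (lt_of_lt_of_le hαhat hle) hb0 hb1.le, eα, ← hbdef]
      field_simp
      ring
    constructor
    · rw [ge_iff_le, hg, hOPT]
      have hmono : (∫ t in b..(1:ℝ), (1 - t ^ α))/α ≤ (∫ t in b..(1:ℝ), (1 - t ^ αhat))/αhat := by
        rw [← intervalIntegral.integral_div, ← intervalIntegral.integral_div]
        apply intervalIntegral.integral_mono_on hb1.le
          ((intervalIntegrable_const.sub (rpow_integrable hb0 hb1.le)).div_const α)
          ((intervalIntegrable_const.sub (rpow_integrable hb0 hb1.le)).div_const αhat)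
        intro t ht
        exact pointwise hαhat hle (lt_of_lt_of_le hb0 ht.1) ht.2
      linarith
    · simp only [OPT, if_pos h1, ge_iff_le]
      rw [Real.rpow_one_add' hx.le (by positivity), ← hbdef]
      have hbge := beta_ge hαhat h1
      rw [← hbdef] at hbge
      have he : (2.7182818283 : ℝ) < Real.exp 1 := Real.exp_one_gt_d9
      have hE : (0:ℝ) < Real.exp 1 := Real.exp_pos 1
      rw [div_le_div_iff₀ hE (by linarith)]
      have hb' : 1 - αhat/(2*(1-αhat)) ≤ b * Real.exp 1 := by
        rw [div_le_iff₀ hE] at hbge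
        exact hbge
      have hc : αhat/(2*(1-αhat)) * (2*(1-αhat)) = αhat :=
        div_mul_cancel₀ _ (by positivity)
      nlinarith [mul_le_mul_of_nonneg_left hb' hx.le, mul_lt_mul_of_pos_left he hαhat,
        mul_pos hb0 hE]
  · -- αhat ≥ 1
    have hA1 : (1:ℝ) ≤ α := le_trans h1 hle
    have hOgeq : OPT αhat ≥ 1 / Real.exp 1 := by
      simp only [OPT, if_neg (not_lt.mpr h1), ge_iff_le]
      have he : (2:ℝ) ≤ Real.exp 1 := by nlinarith [Real.exp_one_gt_d9]
      rw [div_le_div_iff₀ (Real.exp_pos 1) (by linarith)]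
      nlinarith
    refine ⟨?_, hOgeq⟩
    rcases eq_or_lt_of_le h1 with heq | hlt
    · subst heq
      simp only [g, OPT, if_pos le_rfl, if_neg (lt_irrefl (1:ℝ)), ge_iff_le]
      norm_num
      rw [Real.zero_rpow (by positivity : α + 1 ≠ 0), zero_div, sub_zero,
        div_le_div_iff₀ (by norm_num) (by linarith)]
      nlinarith
    · simp only [g, OPT, if_neg (not_le.mpr hlt), if_neg (not_lt.mpr h1), ge_iff_le]
      rw [div_le_div_iff₀ (by linarith) (by linarith)]
      nlinarith
end

section
/- For every positive integer n and real α > 0, consider the random variable R on [n] with CDF F(r) = (n^α/∑_{j=1}^n j^α) · (∑_{j=1}^r j^α)/r^α. Then F is a valid CDF (nondecreasing, F(n) = 1), and for every i ∈ [n], (1 − ((i−1)/i)^α)·F(i) + ((i−1)/i)^α·(F(i) − F(i−1)) = n^α/∑_{j=1}^n j^α (with F(0) := 0). -/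
open Finset

private lemma telesc (α : ℝ) (hα : 0 < α) (r : ℕ) :
    ∑ j ∈ Finset.Icc 1 r, ((j : ℝ) ^ α - ((j : ℝ) - 1) ^ α) = (r : ℝ) ^ α := by
  induction r with
  | zero => simp [Real.zero_rpow hα.ne']
  | succ r ih =>
      rw [Finset.sum_Icc_succ_top (by omega : 1 ≤ r + 1), ih]
      push_cast
      ring_nf

private lemma key_ineq (α : ℝ) (hα : 0 < α) (r : ℕ) :
    ∑ j ∈ Finset.Icc 1 r, (j : ℝ) ^ α * (((r : ℝ) + 1) ^ α - (r : ℝ) ^ α)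
      ≤ (r : ℝ) ^ α * ((r : ℝ) + 1) ^ α := by
  have h : ∑ j ∈ Finset.Icc 1 r, (j : ℝ) ^ α * (((r : ℝ) + 1) ^ α - (r : ℝ) ^ α)
      ≤ ∑ j ∈ Finset.Icc 1 r, ((j : ℝ) ^ α - ((j : ℝ) - 1) ^ α) * ((r : ℝ) + 1) ^ α := by
    apply Finset.sum_le_sum
    intro j hj
    simp only [Finset.mem_Icc] at hj
    have hj1 : (1 : ℝ) ≤ (j : ℝ) := by exact_mod_cast hj.1
    have hjr : (j : ℝ) ≤ (r : ℝ) := by exact_mod_cast hj.2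
    have h1 : ((j : ℝ) - 1) ^ α * ((r : ℝ) + 1) ^ α ≤ (j : ℝ) ^ α * (r : ℝ) ^ α := by
      rw [← Real.mul_rpow (by linarith) (by linarith),
          ← Real.mul_rpow (by linarith) (by linarith)]
      apply Real.rpow_le_rpow (by nlinarith) (by nlinarith) hα.le
    nlinarith
  calc _ ≤ _ := h
    _ = (r : ℝ) ^ α * ((r : ℝ) + 1) ^ α := by
        rw [← Finset.sum_mul, telesc α hα]

theorem stmt12 (n : ℕ) (hn : 1 ≤ n) (α : ℝ) (hα : 0 < α) (F : ℕ → ℝ)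
    (hF0 : F 0 = 0)
    (hF : ∀ r : ℕ, 1 ≤ r → r ≤ n →
      F r = ((n : ℝ) ^ α / ∑ j ∈ Finset.Icc 1 n, (j : ℝ) ^ α)
        * ((∑ j ∈ Finset.Icc 1 r, (j : ℝ) ^ α) / (r : ℝ) ^ α)) :
    (∀ r : ℕ, r < n → F r ≤ F (r + 1)) ∧
    F n = 1 ∧
    (∀ i ∈ Finset.Icc 1 n,
      (1 - (((i : ℝ) - 1) / (i : ℝ)) ^ α) * F i
        + (((i : ℝ) - 1) / (i : ℝ)) ^ α * (F i - F (i - 1))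
      = (n : ℝ) ^ α / ∑ j ∈ Finset.Icc 1 n, (j : ℝ) ^ α) := by
  set S : ℝ := ∑ j ∈ Finset.Icc 1 n, (j : ℝ) ^ α with hS
  have hSpos : 0 < S := by
    apply Finset.sum_pos
    · intro j hj
      simp only [Finset.mem_Icc] at hj
      exact Real.rpow_pos_of_pos (by exact_mod_cast hj.1) α
    · exact ⟨1, Finset.mem_Icc.mpr ⟨le_refl 1, hn⟩⟩
  have hnpos : (0 : ℝ) < (n : ℝ) ^ α :=
    Real.rpow_pos_of_pos (by exact_mod_cast hn) α
  set c : ℝ := (n : ℝ) ^ α / S with hc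
  have hcpos : 0 < c := div_pos hnpos hSpos
  refine ⟨?_, ?_, ?_⟩
  · -- monotonicity
    intro r hr
    rcases Nat.eq_zero_or_pos r with h0 | h1
    · subst h0
      rw [hF0, hF 1 le_rfl (by omega)]
      apply mul_nonneg hcpos.le
      apply div_nonneg
      · apply Finset.sum_nonneg
        intro j hj
        exact Real.rpow_nonneg (Nat.cast_nonneg j) α
      · exact Real.rpow_nonneg (Nat.cast_nonneg 1) α
    · rw [hF r h1 (by omega), hF (r + 1) (by omega) (by omega)]
      apply mul_le_mul_of_nonneg_left _ hcpos.le
      have hrpos : (0 : ℝ) < (r : ℝ) ^ α :=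
        Real.rpow_pos_of_pos (by exact_mod_cast h1) α
      have hr1pos : (0 : ℝ) < ((r : ℝ) + 1) ^ α := by positivity
      have hcast : ((r + 1 : ℕ) : ℝ) = (r : ℝ) + 1 := by push_cast; ring
      rw [hcast, div_le_div_iff₀ hrpos hr1pos,
          Finset.sum_Icc_succ_top (by omega : 1 ≤ r + 1), hcast]
      have hk := key_ineq α hα r
      have he : (∑ j ∈ Finset.Icc 1 r, (j : ℝ) ^ α) * (((r : ℝ) + 1) ^ α - (r : ℝ) ^ α)
          ≤ (r : ℝ) ^ α * ((r : ℝ) + 1) ^ α := by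
        rw [Finset.sum_mul]; exact hk
      nlinarith
  · -- F n = 1
    rw [hF n hn le_rfl, hc, div_mul_div_comm, mul_comm, div_self (by positivity)]
  · -- equalization
    intro i hi
    simp only [Finset.mem_Icc] at hi
    obtain ⟨hi1, hin⟩ := hi
    rcases Nat.eq_or_lt_of_le hi1 with h1 | h2
    · subst h1
      rw [hF 1 le_rfl hin]
      norm_num [Real.zero_rpow hα.ne', Real.one_rpow, hF0]
    · -- 2 ≤ i
      have hi2 : 2 ≤ i := h2
      have hcast : ((i - 1 : ℕ) : ℝ) = (i : ℝ) - 1 :=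
        Nat.cast_pred (by omega)
      have him : (1 : ℝ) ≤ (i : ℝ) - 1 := by
        have : (2:ℝ) ≤ (i:ℝ) := by exact_mod_cast hi2
        linarith
      have hipos : (0 : ℝ) < (i : ℝ) ^ α :=
        Real.rpow_pos_of_pos (by exact_mod_cast (by omega : 0 < i)) α
      have him_pos : (0 : ℝ) < ((i : ℝ) - 1) ^ α :=
        Real.rpow_pos_of_pos (by linarith) α
      have hsplit : (∑ j ∈ Finset.Icc 1 i, (j : ℝ) ^ α)
          = (∑ j ∈ Finset.Icc 1 (i - 1), (j : ℝ) ^ α) + (i : ℝ) ^ α := by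
        have hieq : i = (i - 1) + 1 := by omega
        rw [hieq, Finset.sum_Icc_succ_top (by omega : 1 ≤ i - 1 + 1), ← hieq]
      have hdiv : (((i : ℝ) - 1) / (i : ℝ)) ^ α = ((i : ℝ) - 1) ^ α / (i : ℝ) ^ α :=
        Real.div_rpow (by linarith) (by positivity) α
      rw [hF i hi1 hin, hF (i - 1) (by omega) (by omega), hcast, hsplit, hdiv]
      field_simp
      ring
end

section
/- For every real α > 0 and positive integer n: (a) n^α / ∑_{i=1}^n i^α ≤ (α+1)/n; (b) if α = α(n) satisfies α/n → c for a constant c ∈ (0,∞), then n^α / ∑_{i=1}^n i^α → 1 − e^{−c} as n → ∞. -/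
/-!
(a) Since `x ↦ x ^ α` is monotone, `∑_{i=1}^n i ^ α ≥ ∫_0^n x ^ α dx = n ^ (α + 1) / (α + 1)`.

(b) Reversing the order of summation and dividing by `n ^ α`, the ratio is the reciprocal of
`∑_{j<n} (1 - j/n) ^ αₙ`. Term `j` tends to `e^{-cj}` because `(1 + x/n) ^ n → eˣ`, and
`1 - t ≤ e^{-t}` bounds it by `e^{-cj/2}` once `αₙ/n ≥ c/2`; Tannery's theorem then gives the
limit `∑_j e^{-cj} = 1 / (1 - e^{-c})`.
-/

open Filter Topology Real Finset

theorem rpow_add_one_div_le_sum_Icc_rpow (n : ℕ) {α : ℝ} (hα : 0 ≤ α) :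
    (n : ℝ) ^ (α + 1) / (α + 1) ≤ ∑ i ∈ Icc 1 n, (i : ℝ) ^ α := by
  have hmono : MonotoneOn (fun x : ℝ => x ^ α) (Set.Icc 0 (0 + n)) :=
    fun x hx _ _ hxy => rpow_le_rpow hx.1 hxy hα
  have hint : ∫ x in (0 : ℝ)..0 + n, x ^ α = (n : ℝ) ^ (α + 1) / (α + 1) := by
    rw [integral_rpow (Or.inl (by linarith)), zero_add, zero_rpow (by linarith), sub_zero]
  rw [← hint, ← Ico_add_one_right_eq_Icc, sum_Ico_eq_sum_range]
  refine hmono.integral_le_sum.trans_eq (sum_congr rfl fun i _ => ?_)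
  simp only [zero_add, Nat.cast_add, Nat.cast_one, add_comm]

theorem rpow_div_sum_Icc_rpow_le (n : ℕ) {α : ℝ} (hα : 0 ≤ α) :
    (n : ℝ) ^ α / ∑ i ∈ Icc 1 n, (i : ℝ) ^ α ≤ (α + 1) / n := by
  rcases Nat.eq_zero_or_pos n with rfl | hn
  · simp
  have hn' : (0 : ℝ) < n := by exact_mod_cast hn
  have hsum := rpow_add_one_div_le_sum_Icc_rpow n hα
  rw [div_le_div_iff₀ ((by positivity : (0 : ℝ) < _).trans_le hsum) hn',
    ← rpow_add_one hn'.ne', ← div_le_iff₀' (by linarith)]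
  exact hsum

theorem sum_Icc_one_eq_sum_range_sub {M : Type*} [AddCommMonoid M] (f : ℕ → M) (n : ℕ) :
    ∑ i ∈ Icc 1 n, f i = ∑ j ∈ range n, f (n - j) := by
  rw [← Ico_add_one_right_eq_Icc, sum_Ico_eq_sum_range, ← sum_range_reflect]
  refine sum_congr rfl fun j hj => congrArg f ?_
  have := mem_range.1 hj
  omega

theorem rpow_div_sum_Icc_rpow_eq_inv (n : ℕ) (α : ℝ) :
    (n : ℝ) ^ α / ∑ i ∈ Icc 1 n, (i : ℝ) ^ α = (∑ j ∈ range n, (1 - j / n : ℝ) ^ α)⁻¹ := by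
  rcases Nat.eq_zero_or_pos n with rfl | hn
  · simp
  have hn' : (0 : ℝ) < n := by exact_mod_cast hn
  rw [← inv_div, sum_Icc_one_eq_sum_range_sub, sum_div]
  refine congrArg _ (sum_congr rfl fun j hj => ?_)
  have hj : j ≤ n := (mem_range.1 hj).le
  rw [← div_rpow (Nat.cast_nonneg _) hn'.le, Nat.cast_sub hj, sub_div, div_self hn'.ne']

theorem one_sub_rpow_le_exp_neg_mul {t a : ℝ} (ht : t ≤ 1) (ha : 0 ≤ a) :
    (1 - t) ^ a ≤ exp (-(t * a)) :=
  calc (1 - t) ^ a ≤ exp (-t) ^ a :=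
        rpow_le_rpow (by linarith) (by linarith [add_one_le_exp (-t)]) ha
    _ = exp (-(t * a)) := by rw [← exp_mul, neg_mul]

theorem tendsto_one_add_div_rpow_of_tendsto_div (x : ℝ) {a : ℕ → ℝ} {c : ℝ}
    (ha : Tendsto (fun n : ℕ => a n / n) atTop (𝓝 c)) :
    Tendsto (fun n : ℕ => (1 + x / n) ^ a n) atTop (𝓝 (exp (x * c))) := by
  have hlim := (tendsto_one_add_div_pow_exp x).rpow ha (Or.inl (exp_pos x).ne')
  rw [← exp_mul] at hlim
  have hbase : Tendsto (fun n : ℕ => 1 + x / n) atTop (𝓝 1) := by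
    simpa using ((tendsto_const_nhds (x := x)).div_atTop
      (tendsto_natCast_atTop_atTop (R := ℝ))).const_add (1 : ℝ)
  refine hlim.congr' ?_
  filter_upwards [eventually_gt_atTop 0, hbase.eventually (eventually_gt_nhds zero_lt_one)]
    with n hn hx
  rw [← rpow_natCast, ← rpow_mul hx.le, mul_div_cancel₀ _ (by positivity)]

theorem tendsto_sum_range_of_dominated_convergence {G : Type*} [NormedAddCommGroup G]
    [CompleteSpace G] {f : ℕ → ℕ → G} {g : ℕ → G} {bound : ℕ → ℝ} (h_sum : Summable bound)
    (hab : ∀ k, Tendsto (f · k) atTop (𝓝 (g k)))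
    (h_bound : ∀ᶠ n in atTop, ∀ k < n, ‖f n k‖ ≤ bound k) :
    Tendsto (fun n => ∑ k ∈ range n, f n k) atTop (𝓝 (∑' k, g k)) := by
  have hbound_nonneg (k : ℕ) : 0 ≤ bound k := by
    obtain ⟨n, hn, hkn⟩ := (h_bound.and (eventually_gt_atTop k)).exists
    exact (norm_nonneg _).trans (hn k hkn)
  have hlim := tendsto_tsum_of_dominated_convergence (f := fun n k => if k < n then f n k else 0)
    h_sum (fun k => (hab k).congr' (by filter_upwards [eventually_gt_atTop k] with n hn; simp [hn]))
    (by
      filter_upwards [h_bound] with n hn k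
      split_ifs with hk
      exacts [hn k hk, norm_zero.trans_le (hbound_nonneg k)])
  refine hlim.congr fun n => ?_
  rw [tsum_eq_sum (s := range n) fun k hk => if_neg (by simpa using hk)]
  exact sum_congr rfl fun k hk => if_pos (mem_range.1 hk)

theorem tendsto_sum_range_one_sub_div_rpow {a : ℕ → ℝ} {c : ℝ} (hc : 0 < c)
    (ha : Tendsto (fun n : ℕ => a n / n) atTop (𝓝 c)) :
    Tendsto (fun n : ℕ => ∑ j ∈ range n, (1 - j / n : ℝ) ^ a n) atTop
      (𝓝 (1 - exp (-c))⁻¹) := by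
  have hterm (j : ℕ) :
      Tendsto (fun n : ℕ => (1 - j / n : ℝ) ^ a n) atTop (𝓝 (exp (-c) ^ j)) := by
    rw [← exp_nat_mul, mul_neg, ← neg_mul]
    simpa [neg_div, ← sub_eq_add_neg] using tendsto_one_add_div_rpow_of_tendsto_div (-j) ha
  have hdom : ∀ᶠ n : ℕ in atTop, ∀ j < n, ‖(1 - (j : ℝ) / n) ^ a n‖ ≤ exp (-(c / 2)) ^ j := by
    filter_upwards [ha.eventually (eventually_ge_nhds (half_lt_self hc))] with n hn j hj
    have hn' : (0 : ℝ) < n := by exact_mod_cast (j.zero_le.trans_lt hj)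
    have hjn : (j / n : ℝ) ≤ 1 := (div_le_one hn').2 (by exact_mod_cast hj.le)
    have ha_nonneg : 0 ≤ a n := by
      simpa [hn'.ne'] using mul_nonneg ((half_pos hc).le.trans hn) hn'.le
    rw [norm_of_nonneg (rpow_nonneg (sub_nonneg.2 hjn) _), ← exp_nat_mul]
    refine (one_sub_rpow_le_exp_neg_mul hjn ha_nonneg).trans (exp_le_exp.2 ?_)
    rw [show (j / n : ℝ) * a n = j * (a n / n) by ring]
    nlinarith [(j.cast_nonneg : (0 : ℝ) ≤ j)]
  have hsum := tendsto_sum_range_of_dominated_convergence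
    (summable_geometric_of_lt_one (exp_pos _).le (exp_lt_one_iff.2 (by linarith))) hterm hdom
  rwa [tsum_geometric_of_lt_one (exp_pos _).le (exp_lt_one_iff.2 (by linarith))] at hsum

theorem stmt13_general (αseq : ℕ → ℝ) (c : ℝ) (hc : 0 < c)
    (hlim : Tendsto (fun n : ℕ => αseq n / (n : ℝ)) atTop (nhds c)) :
    (∀ n : ℕ, 1 ≤ n → ∀ α : ℝ, 0 < α →
      (n : ℝ) ^ α / ∑ i ∈ Finset.Icc 1 n, (i : ℝ) ^ α ≤ (α + 1) / (n : ℝ)) ∧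
    Tendsto (fun n : ℕ => (n : ℝ) ^ (αseq n) / ∑ i ∈ Finset.Icc 1 n, (i : ℝ) ^ (αseq n))
      atTop (nhds (1 - Real.exp (-c))) := by
  refine ⟨fun n _ α hα => rpow_div_sum_Icc_rpow_le n hα.le, ?_⟩
  have hsum := (tendsto_sum_range_one_sub_div_rpow hc hlim).inv₀
    (inv_ne_zero (sub_ne_zero.2 (exp_lt_one_iff.2 (by linarith)).ne'))
  rw [inv_inv] at hsum
  simpa only [rpow_div_sum_Icc_rpow_eq_inv] using hsum

theorem stmt13 (αseq : ℕ → ℝ) (hαseq : ∀ n, 0 < αseq n) (c : ℝ) (hc : 0 < c)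
    (hlim : Tendsto (fun n : ℕ => αseq n / (n : ℝ)) atTop (nhds c)) :
    (∀ n : ℕ, 1 ≤ n → ∀ α : ℝ, 0 < α →
      (n : ℝ) ^ α / ∑ i ∈ Finset.Icc 1 n, (i : ℝ) ^ α ≤ (α + 1) / (n : ℝ)) ∧
    Tendsto (fun n : ℕ => (n : ℝ) ^ (αseq n) / ∑ i ∈ Finset.Icc 1 n, (i : ℝ) ^ (αseq n))
      atTop (nhds (1 - Real.exp (-c))) :=
  stmt13_general αseq c hc hlim
end
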